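/- arXiv:math/0304429 — 2 statements merged into one kernel-verified Lean document; each statement's English description precedes it below -/
import Mathlib

section
/- Σ_{p ∈ P_n} q^{n - tail(p)} = Σ_{k=0}^{n-1} ((n-k)/(n+k))·binom(n+k, k)·q^k, where tail(p) := 2n - max{i : p_i = +1, p_{i+1} = -1} is the number of consecutive down-steps at the end of the Dyck path p. -/
open Finset

/-- A permutation is 321-avoiding if it has no decreasing subsequence of length 3. -/
def Avoids321 {n : ℕ} (π : Equiv.Perm (Fin n)) : Prop :=
  ¬ ∃ i j k : Fin n, i < j ∧ j < k ∧ π k < π j ∧ π j < π i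

instance {n : ℕ} : DecidablePred (Avoids321 (n := n)) := fun π =>
  decidable_of_iff (¬ ∃ i j k : Fin n, i < j ∧ j < k ∧ π k < π j ∧ π j < π i) Iff.rfl

/-- The set `T_n` of 321-avoiding permutations of order `n`. -/
def Tset (n : ℕ) : Finset (Equiv.Perm (Fin n)) :=
  Finset.univ.filter (fun π => Avoids321 π)

/-- The value `π(i)` in one-based notation: positions `1,…,n`, values `1,…,n`. -/
def pval {n : ℕ} (π : Equiv.Perm (Fin n)) (i : ℕ) : ℕ :=
  if h : i - 1 < n then (π ⟨i - 1, h⟩ : ℕ) + 1 else 0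

/-- The descent set `Des(π) = {1 ≤ i ≤ n-1 : π(i) > π(i+1)}` (one-based). -/
def desSet {n : ℕ} (π : Equiv.Perm (Fin n)) : Finset ℕ :=
  (Finset.Icc 1 (n - 1)).filter (fun i => pval π (i + 1) < pval π i)

/-- The last descent of `π` (0 for the identity). -/
def ldes {n : ℕ} (π : Equiv.Perm (Fin n)) : ℕ := (desSet π).sup id

/-- `lind(π) = π⁻¹(n)`, the (one-based) position of the letter `n` in `π`. -/
def lind {n : ℕ} (π : Equiv.Perm (Fin n)) : ℕ := pval π.symm n

/-- The inversion number of `π`. -/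
def invNum {n : ℕ} (π : Equiv.Perm (Fin n)) : ℕ :=
  (Finset.univ.filter (fun q : Fin n × Fin n => q.1 < q.2 ∧ π q.2 < π q.1)).card

/-- A ±1 sequence of length `2n` (`true` = +1) is a Dyck path if it has `n` up
steps and every prefix has at least as many up steps as down steps. -/
def IsDyckPred (n : ℕ) (p : Fin (2 * n) → Bool) : Prop :=
  (Finset.univ.filter (fun i => p i = true)).card = n ∧
  ∀ k ≤ 2 * n,
    k ≤ 2 * (Finset.univ.filter (fun i : Fin (2 * n) => (i : ℕ) < k ∧ p i = true)).card

instance (n : ℕ) : DecidablePred (IsDyckPred n) := fun p => by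
  unfold IsDyckPred; infer_instance

/-- The set `P_n` of Dyck paths of length `2n`. -/
def DyckPath (n : ℕ) : Type := { p : Fin (2 * n) → Bool // IsDyckPred n p }

instance (n : ℕ) : Fintype (DyckPath n) := by unfold DyckPath; infer_instance

/-- The `i`-th step of the path, one-based; `true` = +1, `false` = -1. -/
def pstep {n : ℕ} (p : DyckPath n) (i : ℕ) : Bool :=
  if h : i - 1 < 2 * n then p.1 ⟨i - 1, h⟩ else false

/-- `Des(p) = {1 ≤ i ≤ n-1 : p_i = +1, p_{i+1} = -1}`. -/
def pathDes {n : ℕ} (p : DyckPath n) : Finset ℕ :=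
  (Finset.Icc 1 (n - 1)).filter (fun i => pstep p i = true ∧ pstep p (i + 1) = false)

/-- `Des(p⁻¹) = {1 ≤ i ≤ n-1 : p_{2n-i} = +1, p_{2n-i+1} = -1}`. -/
def pathDesInv {n : ℕ} (p : DyckPath n) : Finset ℕ :=
  (Finset.Icc 1 (n - 1)).filter
    (fun i => pstep p (2 * n - i) = true ∧ pstep p (2 * n - i + 1) = false)

/-- `ldes(p) = max{1 ≤ i ≤ n-1 : p_i = +1, p_{i+1} = -1}` (0 if none). -/
def pathLdes {n : ℕ} (p : DyckPath n) : ℕ := (pathDes p).sup id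

/-- `lind(p) = max{1 ≤ i ≤ n : p_i = +1, p_{i+1} = -1}` (0 if none). -/
def pathLind {n : ℕ} (p : DyckPath n) : ℕ :=
  ((Finset.Icc 1 n).filter (fun i => pstep p i = true ∧ pstep p (i + 1) = false)).sup id

/-- `tail(p) = 2n - max{i : p_i = +1, p_{i+1} = -1}`, the number of consecutive
down steps at the end of `p`. -/
def pathTail {n : ℕ} (p : DyckPath n) : ℕ :=
  2 * n -
    ((Finset.Icc 1 (2 * n - 1)).filter
      (fun i => pstep p i = true ∧ pstep p (i + 1) = false)).sup id


/-!
Write `k = n - tail(p)`. A Dyck path ends with a down step, so its last up step, at position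
`n + k`, is its last peak, and `0 ≤ k < n`. Cutting the path just before that step is a
bijection between the paths with statistic `k` and the ballot sequences (every prefix has at
least as many up as down steps) of length `n - 1 + k` with `n - 1` up steps. Removing the last
step of a ballot sequence gives Pascal's recursion, so there are `C(m, a) - C(m, a + 1)` ballot
sequences of length `m ≤ 2a + 1` with `a` up steps; for `m = n - 1 + k`, `a = n - 1` this is
`(n - k) / (n + k) * C(n + k, k)`.
-/

section UpSteps

variable {m : ℕ}

def toSeq (p : Fin m → Bool) (i : ℕ) : Bool :=
  if h : i < m then p ⟨i, h⟩ else false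

def ups (p : Fin m → Bool) : ℕ := #{i | p i = true}

def upsBelow (p : Fin m → Bool) (k : ℕ) : ℕ := #{i : Fin m | (i : ℕ) < k ∧ p i = true}

def IsBallot (p : Fin m → Bool) : Prop := ∀ k ≤ m, k ≤ 2 * upsBelow p k

instance : DecidablePred (IsBallot (m := m)) := fun p => by
  unfold IsBallot; infer_instance

lemma isDyckPred_iff {n : ℕ} {p : Fin (2 * n) → Bool} :
    IsDyckPred n p ↔ ups p = n ∧ IsBallot p := Iff.rfl

lemma toSeq_of_le {p : Fin m → Bool} {i : ℕ} (h : m ≤ i) : toSeq p i = false :=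
  dif_neg (by omega)

lemma lt_of_toSeq {p : Fin m → Bool} {i : ℕ} (h : toSeq p i = true) : i < m := by
  by_contra hi
  rw [toSeq_of_le (not_lt.1 hi)] at h
  exact Bool.false_ne_true h

lemma upsBelow_eq_card_range (p : Fin m → Bool) (k : ℕ) :
    upsBelow p k = #{i ∈ range k | toSeq p i = true} := by
  refine card_nbij (fun i => i) (fun i hi => ?_) Fin.val_injective.injOn fun i hi => ?_
  · simp_all [toSeq]
  · have him := lt_of_toSeq (mem_filter.1 hi).2
    refine ⟨⟨i, him⟩, ?_, rfl⟩
    simp_all [toSeq]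

lemma upsBelow_succ (p : Fin m → Bool) (k : ℕ) :
    upsBelow p (k + 1) = upsBelow p k + (toSeq p k).toNat := by
  rw [upsBelow_eq_card_range, upsBelow_eq_card_range, range_add_one, filter_insert]
  cases h : toSeq p k
  · simp
  · simp [card_insert_of_notMem]

lemma upsBelow_congr {m' : ℕ} {p : Fin m → Bool} {p' : Fin m' → Bool} {k : ℕ}
    (h : ∀ i < k, toSeq p i = toSeq p' i) : upsBelow p k = upsBelow p' k := by
  rw [upsBelow_eq_card_range, upsBelow_eq_card_range]
  exact congrArg card (filter_congr fun i hi => by rw [h i (mem_range.1 hi)])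

lemma upsBelow_of_le (p : Fin m → Bool) {k : ℕ} (h : m ≤ k) : upsBelow p k = ups p :=
  congrArg card (filter_congr fun i _ => by simp [show (i : ℕ) < k by omega])

lemma upsBelow_le (p : Fin m → Bool) (k : ℕ) : upsBelow p k ≤ k := by
  rw [upsBelow_eq_card_range]
  exact (card_filter_le _ _).trans (card_range k).le

end UpSteps

section Ballot

variable {m a : ℕ}

def ballotSeqs (m a : ℕ) : Finset (Fin m → Bool) := {p | ups p = a ∧ IsBallot p}

lemma mem_ballotSeqs {p : Fin m → Bool} : p ∈ ballotSeqs m a ↔ ups p = a ∧ IsBallot p := by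
  simp [ballotSeqs]

lemma upsBelow_snoc (w : Fin m → Bool) (b : Bool) {k : ℕ} (hk : k ≤ m) :
    upsBelow (Fin.snoc w b : Fin (m + 1) → Bool) k = upsBelow w k :=
  upsBelow_congr fun i hi => by
    simp [toSeq, Fin.snoc, show i < m by omega, show i < m + 1 by omega]

lemma ups_snoc (w : Fin m → Bool) (b : Bool) :
    ups (Fin.snoc w b : Fin (m + 1) → Bool) = ups w + b.toNat := by
  rw [← upsBelow_of_le _ le_rfl, upsBelow_succ, upsBelow_snoc w b le_rfl,
    upsBelow_of_le w le_rfl]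
  simp [toSeq, Fin.snoc]

lemma isBallot_snoc_iff (w : Fin m → Bool) (b : Bool) :
    IsBallot (Fin.snoc w b : Fin (m + 1) → Bool) ↔
      IsBallot w ∧ m + 1 ≤ 2 * (ups w + b.toNat) := by
  rw [← ups_snoc, ← upsBelow_of_le _ le_rfl]
  constructor
  · intro h
    exact ⟨fun k hk => upsBelow_snoc w b hk ▸ h k (by omega), h (m + 1) le_rfl⟩
  · rintro ⟨hw, hlast⟩ k hk
    rcases Nat.lt_or_ge k (m + 1) with hk' | hk'
    · rw [upsBelow_snoc w b (by omega)]
      exact hw k (by omega)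
    · obtain rfl : k = m + 1 := by omega
      exact hlast

lemma snoc_mem_ballotSeqs_iff (w : Fin m → Bool) (b : Bool) :
    (Fin.snoc w b : Fin (m + 1) → Bool) ∈ ballotSeqs (m + 1) a ↔
      ups w + b.toNat = a ∧ IsBallot w ∧ m + 1 ≤ 2 * a := by
  rw [mem_ballotSeqs, ups_snoc, isBallot_snoc_iff]
  constructor <;> rintro ⟨rfl, hw, h⟩ <;> exact ⟨rfl, hw, h⟩

lemma ballotSeqs_eq_empty (h : 2 * a < m) : ballotSeqs m a = ∅ := by
  refine eq_empty_of_forall_notMem fun p hp => ?_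
  obtain ⟨hups, hp⟩ := mem_ballotSeqs.1 hp
  have := hp m le_rfl
  rw [upsBelow_of_le p le_rfl, hups] at this
  omega

lemma card_ballotSeqs_succ_succ (h : m ≤ 2 * a + 1) :
    #(ballotSeqs (m + 1) (a + 1)) = #(ballotSeqs m a) + #(ballotSeqs m (a + 1)) := by
  rw [← card_union_of_disjoint (disjoint_left.2 fun p h₁ h₂ => by
    rw [mem_ballotSeqs] at h₁ h₂; omega)]
  refine card_nbij' Fin.init (fun w => Fin.snoc w (decide (ups w = a))) ?_ ?_ ?_ ?_
  · refine fun w => Fin.snocCases (fun w b hw => ?_) w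
    simp only [coe_union, Set.mem_union, mem_coe, mem_ballotSeqs, Fin.init_snoc]
    rw [mem_coe, snoc_mem_ballotSeqs_iff] at hw
    cases b <;> simp_all
  · intro w hw
    simp only [coe_union, Set.mem_union, mem_coe, mem_ballotSeqs] at hw
    rw [mem_coe, snoc_mem_ballotSeqs_iff]
    rcases hw with ⟨hups, hw⟩ | ⟨hups, hw⟩ <;> simp [hw, hups] <;> omega
  · refine fun w => Fin.snocCases (fun w b hw => ?_) w
    rw [mem_coe, snoc_mem_ballotSeqs_iff] at hw
    simp only [Fin.init_snoc]
    cases b <;> simp at hw ⊢ <;> omega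
  · intro w _
    exact Fin.init_snoc _ _

theorem card_ballotSeqs_add_choose (h : m ≤ 2 * a + 1) :
    #(ballotSeqs m a) + m.choose (a + 1) = m.choose a := by
  induction m generalizing a with
  | zero =>
    cases a with
    | zero => rfl
    | succ a => simp [ballotSeqs, ups]
  | succ m ih =>
    cases a with
    | zero => simp [ballotSeqs_eq_empty (show 2 * 0 < m + 1 by omega), show m = 0 by omega]
    | succ a =>
      rcases Nat.lt_or_ge (2 * a + 1) m with hm | hm
      · obtain rfl : m = 2 * a + 2 := by omega
        rw [ballotSeqs_eq_empty (by omega), card_empty, zero_add,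
          show 2 * a + 2 + 1 = 2 * (a + 1) + 1 by ring, Nat.choose_symm_half]
      · have h₁ := ih (a := a) hm
        have h₂ := ih (a := a + 1) (by omega)
        rw [card_ballotSeqs_succ_succ hm, Nat.choose_succ_succ', Nat.choose_succ_succ']
        omega

end Ballot

section LastUp

variable {m : ℕ}

def IsLastUp (p : Fin m → Bool) (j : ℕ) : Prop :=
  toSeq p j = true ∧ ∀ i : Fin m, j < i → p i = false

instance (p : Fin m → Bool) (j : ℕ) : Decidable (IsLastUp p j) := by
  unfold IsLastUp; infer_instance

lemma IsLastUp.toSeq_eq_false {p : Fin m → Bool} {j i : ℕ} (h : IsLastUp p j) (hi : j < i) :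
    toSeq p i = false := by
  unfold toSeq
  split_ifs with him
  exacts [h.2 ⟨i, him⟩ hi, rfl]

lemma exists_isLastUp (p : Fin m → Bool) (h : 0 < ups p) : ∃ j, IsLastUp p j := by
  obtain ⟨i₀, hi₀⟩ := card_pos.1 h
  set S : Finset (Fin m) := {i | p i = true}
  have hmax := (mem_filter.1 (S.max'_mem ⟨i₀, hi₀⟩)).2
  refine ⟨S.max' ⟨i₀, hi₀⟩, by simpa [toSeq] using hmax, fun i hi => ?_⟩
  by_contra hne
  have hmem : i ∈ S := by simpa [S] using hne
  exact absurd (S.le_max' _ hmem) (not_le.2 hi)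

lemma IsLastUp.unique {p : Fin m → Bool} {j j' : ℕ} (h : IsLastUp p j) (h' : IsLastUp p j') :
    j = j' := by
  by_contra hne
  rcases Nat.lt_or_gt_of_ne hne with hlt | hlt
  · exact Bool.false_ne_true ((h.toSeq_eq_false hlt).symm.trans h'.1)
  · exact Bool.false_ne_true ((h'.toSeq_eq_false hlt).symm.trans h.1)

lemma IsLastUp.upsBelow_eq_ups {p : Fin m → Bool} {j k : ℕ} (h : IsLastUp p j) (hk : j < k) :
    upsBelow p k = ups p := by
  have hstable : ∀ k', j < k' → upsBelow p k' = upsBelow p (j + 1) := by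
    intro k' hk'
    induction k', hk' using Nat.le_induction with
    | base => rfl
    | succ k' hk' ih => rw [upsBelow_succ, h.toSeq_eq_false (by omega : j < k'), ih]; rfl
  rw [← upsBelow_of_le p (le_max_right k m), hstable k hk, hstable (max k m) (by omega)]

lemma IsLastUp.ups_eq {p : Fin m → Bool} {j : ℕ} (h : IsLastUp p j) :
    ups p = upsBelow p j + 1 := by
  rw [← h.upsBelow_eq_ups (Nat.lt_succ_self j), upsBelow_succ, h.1]
  rfl

end LastUp

section DyckPath

variable {n : ℕ}

lemma DyckPath.ups_eq (p : DyckPath n) : ups p.1 = n := p.2.1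

lemma DyckPath.isBallot (p : DyckPath n) : IsBallot p.1 := p.2.2

lemma IsLastUp.bounds {p : DyckPath n} {j : ℕ} (h : IsLastUp p.1 j) :
    n ≤ j + 1 ∧ j + 1 < 2 * n := by
  have hballot := p.isBallot j (lt_of_toSeq h.1).le
  have hbelow := upsBelow_le p.1 (j + 1)
  have hups := h.ups_eq
  rw [h.upsBelow_eq_ups (Nat.lt_succ_self j), p.ups_eq] at hbelow
  rw [p.ups_eq] at hups
  omega

lemma pathTail_eq_of_isLastUp {p : DyckPath n} {j : ℕ} (h : IsLastUp p.1 j)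
    (hj : j + 1 < 2 * n) : pathTail p = 2 * n - (j + 1) := by
  unfold pathTail
  congr 1
  -- `pstep p i` unfolds to `toSeq p.1 (i - 1)`.
  refine le_antisymm (Finset.sup_le fun i hi => ?_) (le_sup (f := id) ?_)
  · obtain ⟨hi, hup, -⟩ := mem_filter.1 hi
    have : ¬ j < i - 1 := fun hlt =>
      Bool.false_ne_true ((h.toSeq_eq_false hlt).symm.trans hup)
    simp only [id]
    omega
  · exact mem_filter.2
      ⟨mem_Icc.2 ⟨by omega, by omega⟩, h.1, h.toSeq_eq_false (Nat.lt_succ_self j)⟩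

theorem sub_pathTail_eq_iff (hn : 1 ≤ n) (p : DyckPath n) (k : ℕ) :
    n - pathTail p = k ↔ IsLastUp p.1 (n - 1 + k) := by
  obtain ⟨j, hj⟩ := exists_isLastUp p.1 (by rw [p.ups_eq]; omega)
  obtain ⟨hj₁, hj₂⟩ := hj.bounds
  rw [pathTail_eq_of_isLastUp hj hj₂]
  exact ⟨fun hk => by convert hj using 1; omega, fun hk => by have := hj.unique hk; omega⟩

theorem sub_pathTail_lt (hn : 1 ≤ n) (p : DyckPath n) : n - pathTail p < n := by
  obtain ⟨j, hj⟩ := exists_isLastUp p.1 (by rw [p.ups_eq]; omega)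
  obtain ⟨hj₁, hj₂⟩ := hj.bounds
  rw [pathTail_eq_of_isLastUp hj hj₂]
  omega

end DyckPath

section Completion

variable {n j : ℕ}

/-- The path `w`, then an up step at position `j`, then down steps up to length `2n`. -/
def peakCompletion (n : ℕ) (w : Fin j → Bool) : Fin (2 * n) → Bool :=
  fun i => toSeq w i || decide ((i : ℕ) = j)

lemma toSeq_peakCompletion (w : Fin j → Bool) {i : ℕ} (hi : i < 2 * n) :
    toSeq (peakCompletion n w) i = (toSeq w i || decide (i = j)) := by
  simp [toSeq, peakCompletion, hi]

lemma isLastUp_peakCompletion (w : Fin j → Bool) (hj : j < 2 * n) :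
    IsLastUp (peakCompletion n w) j :=
  ⟨by simp [toSeq_peakCompletion w hj], fun i hi => by
    simp [peakCompletion, toSeq_of_le hi.le, hi.ne']⟩

lemma upsBelow_peakCompletion (w : Fin j → Bool) (hj : j < 2 * n) {k : ℕ} (hk : k ≤ j) :
    upsBelow (peakCompletion n w) k = upsBelow w k :=
  upsBelow_congr fun i hi => by
    simp [toSeq_peakCompletion w (show i < 2 * n by omega), show i ≠ j by omega]

lemma ups_peakCompletion (w : Fin j → Bool) (hj : j < 2 * n) :
    ups (peakCompletion n w) = ups w + 1 := by
  rw [(isLastUp_peakCompletion w hj).ups_eq, upsBelow_peakCompletion w hj le_rfl,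
    upsBelow_of_le w le_rfl]

lemma isDyckPred_peakCompletion {w : Fin j → Bool} (hj : j < 2 * n)
    (hw : w ∈ ballotSeqs j (n - 1)) : IsDyckPred n (peakCompletion n w) := by
  obtain ⟨hups, hballot⟩ := mem_ballotSeqs.1 hw
  have hn : ups (peakCompletion n w) = n := by rw [ups_peakCompletion w hj]; omega
  refine isDyckPred_iff.2 ⟨hn, fun k hk => ?_⟩
  rcases Nat.lt_or_ge j k with hjk | hkj
  · rw [(isLastUp_peakCompletion w hj).upsBelow_eq_ups hjk, hn]
    omega
  · rw [upsBelow_peakCompletion w hj hkj]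
    exact hballot k hkj

lemma take_mem_ballotSeqs {p : DyckPath n} (h : IsLastUp p.1 j) :
    Fin.take j (lt_of_toSeq h.1).le p.1 ∈ ballotSeqs j (n - 1) := by
  have hj := lt_of_toSeq h.1
  have htake : ∀ k ≤ j, upsBelow (Fin.take j hj.le p.1) k = upsBelow p.1 k :=
    fun k hk => upsBelow_congr fun i hi => by
      simp [toSeq, show i < j by omega, show i < 2 * n by omega]
  refine mem_ballotSeqs.2 ⟨?_, fun k hk => htake k hk ▸ p.isBallot k (by omega)⟩
  rw [← upsBelow_of_le _ le_rfl, htake j le_rfl]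
  have := h.ups_eq
  rw [p.ups_eq] at this
  omega

lemma toSeq_take {m : ℕ} (p : Fin m → Bool) (h : j ≤ m) (i : ℕ) :
    toSeq (Fin.take j h p) i = (toSeq p i && decide (i < j)) := by
  by_cases hij : i < j
  · simp [toSeq, hij, show i < m by omega]
  · simp [toSeq, hij]

lemma peakCompletion_take {p : DyckPath n} (h : IsLastUp p.1 j) :
    peakCompletion n (Fin.take j (lt_of_toSeq h.1).le p.1) = p.1 := by
  funext i
  have hi : toSeq p.1 i = p.1 i := by simp [toSeq]
  rw [peakCompletion, toSeq_take, hi]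
  rcases Nat.lt_trichotomy i j with hij | hij | hij
  · simp [hij, hij.ne]
  · simp [hij, ← hi, h.1]
  · simp [hij.ne', not_lt.2 hij.le, h.2 i hij]

theorem card_isLastUp (hj : j < 2 * n) :
    #{p : DyckPath n | IsLastUp p.1 j} = #(ballotSeqs j (n - 1)) := by
  refine card_bij' (fun p hp => Fin.take j (lt_of_toSeq (mem_filter.1 hp).2.1).le p.1)
    (fun w hw => ⟨peakCompletion n w, isDyckPred_peakCompletion hj hw⟩)
    (fun p hp => take_mem_ballotSeqs (mem_filter.1 hp).2)
    (fun w _ => mem_filter.2 ⟨mem_univ _, isLastUp_peakCompletion w hj⟩)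
    (fun p hp => Subtype.ext (peakCompletion_take (mem_filter.1 hp).2)) fun w _ => ?_
  funext i
  simp [peakCompletion, toSeq, i.2.ne]

end Completion

lemma choose_sub_choose_succ (a k : ℕ) :
    ((a + k).choose a : ℚ) - (a + k).choose (a + 1) =
      (a + 1 - k) / (a + 1 + k) * (a + 1 + k).choose k := by
  have h₁ : ((a + k + 1 : ℕ) : ℚ) * (a + k).choose a =
      (a + k + 1).choose (a + 1) * (a + 1) := by
    exact_mod_cast Nat.add_one_mul_choose_eq (a + k) a
  have h₂ : ((a + k).choose (a + 1) : ℚ) * (a + k + 1) = (a + k + 1).choose (a + 1) * k := by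
    have := Nat.choose_mul_succ_eq (a + k) (a + 1)
    rw [show a + k + 1 - (a + 1) = k by omega] at this
    exact_mod_cast this
  rw [show a + 1 + k = a + k + 1 by ring,
    ← Nat.choose_symm_of_eq_add (show a + k + 1 = a + 1 + k by ring)]
  push_cast at h₁
  field_simp
  linear_combination h₁ - h₂

theorem card_ballotSeqs_eq {a k : ℕ} (hk : k ≤ a + 1) :
    (#(ballotSeqs (a + k) a) : ℚ) = (a + 1 - k) / (a + 1 + k) * (a + 1 + k).choose k := by
  rw [← choose_sub_choose_succ, eq_sub_iff_add_eq]
  exact_mod_cast card_ballotSeqs_add_choose (by omega)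

theorem tail_gf_formula (n : ℕ) (hn : 1 ≤ n) (q : ℚ) :
    ∑ p : DyckPath n, q ^ (n - pathTail p) =
      ∑ k ∈ Finset.range n,
        (((n : ℚ) - k) / ((n : ℚ) + k)) * ((n + k).choose k) * q ^ k := by
  rw [← sum_fiberwise_of_maps_to fun p _ => mem_range.2 (sub_pathTail_lt hn p)]
  refine sum_congr rfl fun k hk => ?_
  have hk : k < n := mem_range.1 hk
  obtain ⟨a, rfl⟩ := Nat.exists_eq_add_of_le' hn
  calc ∑ p with a + 1 - pathTail p = k, q ^ (a + 1 - pathTail p)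
      = ∑ p with a + 1 - pathTail p = k, q ^ k :=
        sum_congr rfl fun p hp => by rw [(mem_filter.1 hp).2]
    _ = #(ballotSeqs (a + k) a) * q ^ k := by
      rw [sum_const, nsmul_eq_mul, filter_congr fun p _ => sub_pathTail_eq_iff hn p k,
        card_isLastUp (by omega), Nat.add_sub_cancel]
    _ = _ := by
      rw [card_ballotSeqs_eq (by omega)]
      push_cast
      ring
end

section
/- Σ_{π ∈ T_n} q^{ldes(π)} = Σ_{k=0}^{n-1} ((n-k)/(n+k))·binom(n+k,k)·q^k; in particular setting q=1 recovers |T_n| = Catalan(n). -/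
open Finset

-- ## descent basics

lemma mem_desSet {n : ℕ} (σ : Equiv.Perm (Fin n)) (i : ℕ) :
    i ∈ desSet σ ↔ ∃ (_ : 1 ≤ i) (h2 : i < n), σ ⟨i, h2⟩ < σ ⟨i - 1, by omega⟩ := by
  unfold desSet pval
  rw [mem_filter, mem_Icc]
  constructor
  · rintro ⟨⟨h1, h2⟩, h3⟩
    have hn : i < n := by omega
    refine ⟨h1, hn, ?_⟩
    rw [dif_pos (by omega : i + 1 - 1 < n), dif_pos (by omega : i - 1 < n)] at h3
    have he : (⟨i + 1 - 1, by omega⟩ : Fin n) = ⟨i, hn⟩ := Fin.mk_eq_mk.mpr (by omega)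
    rw [he] at h3
    exact Fin.lt_iff_val_lt_val.mpr (by omega)
  · rintro ⟨h1, h2, h3⟩
    refine ⟨⟨h1, by omega⟩, ?_⟩
    rw [dif_pos (by omega : i + 1 - 1 < n), dif_pos (by omega : i - 1 < n)]
    have : (σ ⟨i, h2⟩ : ℕ) < (σ ⟨i - 1, by omega⟩ : ℕ) := h3
    simp only [show i + 1 - 1 = i by omega]
    omega

lemma ldes_le_iff {n : ℕ} (σ : Equiv.Perm (Fin n)) (k : ℕ) :
    ldes σ ≤ k ↔ ∀ j : ℕ, k ≤ j → ∀ h : j + 1 < n,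
      σ ⟨j, Nat.lt_of_succ_lt h⟩ < σ ⟨j + 1, h⟩ := by
  unfold ldes
  rw [Finset.sup_le_iff]
  constructor
  · intro H j hj h
    by_contra hc
    have hne : σ ⟨j, Nat.lt_of_succ_lt h⟩ ≠ σ ⟨j + 1, h⟩ := by
      intro he
      have := σ.injective he
      simp [Fin.ext_iff] at this
    have hlt : σ ⟨j + 1, h⟩ < σ ⟨j, Nat.lt_of_succ_lt h⟩ := by
      rcases lt_or_gt_of_ne hne with h' | h'
      · exact absurd h' hc
      · exact h'
    have hmem : j + 1 ∈ desSet σ := by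
      rw [mem_desSet]
      exact ⟨by omega, h, by simpa using hlt⟩
    have := H _ hmem
    simp only [id] at this
    omega
  · intro H i hi
    rw [mem_desSet] at hi
    obtain ⟨h1, h2, h3⟩ := hi
    simp only [id_eq]
    by_contra hc
    push_neg at hc
    have := H (i - 1) (by omega) (by omega : i - 1 + 1 < n)
    have he : σ ⟨i - 1 + 1, by omega⟩ = σ ⟨i, h2⟩ := congrArg σ (Fin.mk_eq_mk.mpr (by omega))
    rw [he] at this
    exact absurd h3 (not_lt.2 this.le)

lemma ldes_eq_of_mem {n : ℕ} (σ : Equiv.Perm (Fin n)) (k : ℕ)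
    (hk : k ∈ desSet σ) (hle : ldes σ ≤ k) : ldes σ = k :=
  le_antisymm hle (Finset.le_sup (f := id) hk)

lemma ldes_le_sub_one {n : ℕ} (σ : Equiv.Perm (Fin n)) : ldes σ ≤ n - 1 := by
  unfold ldes
  apply Finset.sup_le
  intro i hi
  rw [mem_desSet] at hi
  obtain ⟨h1, h2, _⟩ := hi
  simp only [id]; omega

-- ## inserting the top value at position p

def insTop {n : ℕ} (p : Fin (n + 1)) (σ : Equiv.Perm (Fin n)) : Equiv.Perm (Fin (n + 1)) :=
  (finSuccEquiv' p).trans ((Equiv.optionCongr σ).trans finSuccEquivLast.symm)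

@[simp] lemma insTop_self {n : ℕ} (p : Fin (n + 1)) (σ : Equiv.Perm (Fin n)) :
    insTop p σ p = Fin.last n := by
  simp [insTop, finSuccEquiv'_at]

@[simp] lemma insTop_succAbove {n : ℕ} (p : Fin (n + 1)) (σ : Equiv.Perm (Fin n)) (j : Fin n) :
    insTop p σ (p.succAbove j) = Fin.castSucc (σ j) := by
  simp [insTop, finSuccEquiv'_succAbove]

lemma insTop_apply_lt {n : ℕ} (p : Fin (n + 1)) (σ : Equiv.Perm (Fin n)) (i : Fin (n + 1))
    (h : i < p) : insTop p σ i = Fin.castSucc (σ ⟨i, by have := p.isLt; have := Fin.lt_iff_val_lt_val.mp h; omega⟩) := by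
  have hi : (i : ℕ) < n := by
    have := p.isLt; have := Fin.lt_iff_val_lt_val.mp h; omega
  have he : p.succAbove ⟨i, hi⟩ = i := by
    rw [Fin.succAbove_of_castSucc_lt]
    · exact Fin.ext rfl
    · rw [Fin.lt_iff_val_lt_val]
      exact Fin.lt_iff_val_lt_val.mp h
  conv_lhs => rw [← he]
  rw [insTop_succAbove]

lemma insTop_apply_gt {n : ℕ} (p : Fin (n + 1)) (σ : Equiv.Perm (Fin n)) (i : Fin (n + 1))
    (h : p < i) : insTop p σ i = Fin.castSucc (σ ⟨(i : ℕ) - 1, by have := i.isLt; omega⟩) := by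
  have h1 : 1 ≤ (i : ℕ) := by have := Fin.lt_iff_val_lt_val.mp h; omega
  have hi : (i : ℕ) - 1 < n := by have := i.isLt; omega
  have he : p.succAbove ⟨(i : ℕ) - 1, hi⟩ = i := by
    rw [Fin.succAbove_of_le_castSucc]
    · exact Fin.ext (by simp only [Fin.val_succ]; omega)
    · rw [Fin.le_iff_val_le_val]
      simp only [Fin.coe_castSucc]
      have := Fin.lt_iff_val_lt_val.mp h; omega
  conv_lhs => rw [← he]
  rw [insTop_succAbove]

lemma insTop_symm_last {n : ℕ} (p : Fin (n + 1)) (σ : Equiv.Perm (Fin n)) :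
    (insTop p σ).symm (Fin.last n) = p := by
  rw [← insTop_self p σ, Equiv.symm_apply_apply]

lemma insTop_inj {n : ℕ} (p : Fin (n + 1)) (σ τ : Equiv.Perm (Fin n))
    (h : insTop p σ = insTop p τ) : σ = τ := by
  ext j
  have := congrArg (fun f : Equiv.Perm (Fin (n + 1)) => f (p.succAbove j)) h
  simp only [insTop_succAbove] at this
  exact congrArg Fin.val (Fin.castSucc_injective n this)

lemma exists_insTop {n : ℕ} (π : Equiv.Perm (Fin (n + 1))) :
    ∃ σ : Equiv.Perm (Fin n), insTop (π.symm (Fin.last n)) σ = π := by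
  set p := π.symm (Fin.last n) with hp
  have hne : ∀ j : Fin n, π (p.succAbove j) ≠ Fin.last n := by
    intro j he
    apply Fin.succAbove_ne p j
    have h2 := congrArg (Equiv.symm π) he
    rw [Equiv.symm_apply_apply] at h2
    rw [h2, hp]
  have hinj : Function.Injective (fun j : Fin n => (π (p.succAbove j)).castPred (hne j)) := by
    intro a b hab
    have h2 : π (p.succAbove a) = π (p.succAbove b) := by
      have h3 := congrArg Fin.castSucc hab
      simp only at h3
      rwa [Fin.castSucc_castPred, Fin.castSucc_castPred] at h3
    exact Fin.succAbove_right_injective (π.injective h2)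
  refine ⟨Equiv.ofBijective _ (Finite.injective_iff_bijective.mp hinj), ?_⟩
  ext i
  rcases eq_or_ne i p with rfl | hi
  · simp [hp]
  · obtain ⟨j, hj⟩ := Fin.exists_succAbove_eq hi
    rw [← hj, insTop_succAbove]
    show Fin.val (Fin.castSucc ((π (p.succAbove j)).castPred (hne j))) = _
    rw [Fin.castSucc_castPred]

-- ## increasing-from predicate

def IncFrom {n : ℕ} (σ : Equiv.Perm (Fin n)) (t : ℕ) : Prop :=
  ∀ j : ℕ, t ≤ j → ∀ h : j + 1 < n, σ ⟨j, Nat.lt_of_succ_lt h⟩ < σ ⟨j + 1, h⟩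

lemma ldes_le_iff_incFrom {n : ℕ} (σ : Equiv.Perm (Fin n)) (k : ℕ) :
    ldes σ ≤ k ↔ IncFrom σ k := ldes_le_iff σ k

lemma IncFrom.pairs {n : ℕ} {σ : Equiv.Perm (Fin n)} {t : ℕ} (H : IncFrom σ t) :
    ∀ a b : Fin n, t ≤ (a : ℕ) → a < b → σ a < σ b := by
  intro a b ha hab
  have key : ∀ m : ℕ, ∀ h : m < n, (a : ℕ) < m → σ a < σ ⟨m, h⟩ := by
    intro m
    induction m with
    | zero => intro _ h2; omega
    | succ m ih =>
      intro h h2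
      have hstep : σ ⟨m, by omega⟩ < σ ⟨m + 1, h⟩ := H m (by omega) h
      rcases Nat.lt_or_ge (a : ℕ) m with h3 | h3
      · exact lt_trans (ih (by omega) h3) hstep
      · have hea : a = ⟨m, by omega⟩ := Fin.ext (show (a:ℕ) = m by omega)
        rw [hea]
        exact hstep
  have hb := key (b : ℕ) b.isLt (Fin.lt_iff_val_lt_val.mp hab)
  have : (⟨(b : ℕ), b.isLt⟩ : Fin n) = b := Fin.ext rfl
  rwa [this] at hb

lemma le_of_lt_succAbove {n : ℕ} {p : Fin (n + 1)} {a : Fin n}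
    (h : p < p.succAbove a) : (p : ℕ) ≤ (a : ℕ) := by
  rcases Nat.lt_or_ge (a : ℕ) (p : ℕ) with h' | h'
  · exfalso
    rw [Fin.succAbove_of_castSucc_lt p a (by rw [Fin.lt_iff_val_lt_val]; exact h')] at h
    rw [Fin.lt_iff_val_lt_val] at h
    simp only [Fin.coe_castSucc] at h
    omega
  · exact h'

lemma succAbove_of_le {n : ℕ} (p : Fin (n + 1)) (a : Fin n) (h : (p : ℕ) ≤ (a : ℕ)) :
    p.succAbove a = a.succ :=
  Fin.succAbove_of_le_castSucc p a (by rw [Fin.le_iff_val_le_val]; exact h)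

-- ## avoidance transfer

lemma avoids_insTop_iff {n : ℕ} (p : Fin (n + 1)) (σ : Equiv.Perm (Fin n)) :
    Avoids321 (insTop p σ) ↔
      Avoids321 σ ∧ ∀ a b : Fin n, (p : ℕ) ≤ (a : ℕ) → a < b → σ a < σ b := by
  constructor
  · intro H
    constructor
    · rintro ⟨i, j, k, h1, h2, h3, h4⟩
      apply H
      refine ⟨p.succAbove i, p.succAbove j, p.succAbove k,
        Fin.succAbove_lt_succAbove_iff.mpr h1, Fin.succAbove_lt_succAbove_iff.mpr h2, ?_, ?_⟩
      · rw [insTop_succAbove, insTop_succAbove]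
        exact Fin.castSucc_lt_castSucc_iff.mpr h3
      · rw [insTop_succAbove, insTop_succAbove]
        exact Fin.castSucc_lt_castSucc_iff.mpr h4
    · intro a b ha hab
      by_contra hc
      have hne : σ a ≠ σ b := fun he => by
        have := σ.injective he
        exact absurd (this ▸ hab) (lt_irrefl _)
      have hlt : σ b < σ a := by
        rcases lt_or_gt_of_ne hne with h' | h'
        · exact absurd h' hc
        · exact h'
      apply H
      refine ⟨p, p.succAbove a, p.succAbove b, ?_, Fin.succAbove_lt_succAbove_iff.mpr hab, ?_, ?_⟩
      · rw [succAbove_of_le p a ha]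
        rw [Fin.lt_iff_val_lt_val, Fin.val_succ]
        omega
      · rw [insTop_succAbove, insTop_succAbove]
        exact Fin.castSucc_lt_castSucc_iff.mpr hlt
      · rw [insTop_succAbove, insTop_self]
        exact Fin.castSucc_lt_last _
  · rintro ⟨H1, H2⟩ ⟨i, j, k, h1, h2, h3, h4⟩
    have hlast : ∀ x : Fin (n + 1), x ≠ p → insTop p σ x < Fin.last n := by
      intro x hx
      obtain ⟨a, ha⟩ := Fin.exists_succAbove_eq hx
      rw [← ha, insTop_succAbove]
      exact Fin.castSucc_lt_last _
    have hjp : j ≠ p := by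
      intro he
      have h4' : insTop p σ j < insTop p σ i := h4
      rw [he, insTop_self] at h4'
      have hip : i ≠ p := by
        intro he2
        rw [he2, ← he] at h1
        exact absurd h1 (lt_irrefl _)
      exact absurd h4' (not_lt.2 (hlast i hip).le)
    have hkp : k ≠ p := by
      intro he
      have h3' : insTop p σ k < insTop p σ j := h3
      rw [he, insTop_self] at h3'
      exact absurd h3' (not_lt.2 (hlast j hjp).le)
    obtain ⟨a, ha⟩ := Fin.exists_succAbove_eq hjp
    obtain ⟨b, hb⟩ := Fin.exists_succAbove_eq hkp
    have hab : a < b := by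
      rw [← ha, ← hb] at h2
      exact Fin.succAbove_lt_succAbove_iff.mp h2
    have hba : σ b < σ a := by
      rw [← ha, ← hb, insTop_succAbove, insTop_succAbove] at h3
      exact Fin.castSucc_lt_castSucc_iff.mp h3
    rcases eq_or_ne i p with he | hip
    · -- top is the '3' of the pattern; get an inversion after p
      have hpa : (p : ℕ) ≤ (a : ℕ) := by
        apply le_of_lt_succAbove
        rw [ha, ← he]; exact h1
      exact absurd (H2 a b hpa hab) (not_lt.2 hba.le)
    · obtain ⟨c, hc⟩ := Fin.exists_succAbove_eq hip
      have hca : c < a := by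
        rw [← hc, ← ha] at h1
        exact Fin.succAbove_lt_succAbove_iff.mp h1
      have hac : σ a < σ c := by
        rw [← hc, ← ha, insTop_succAbove, insTop_succAbove] at h4
        exact Fin.castSucc_lt_castSucc_iff.mp h4
      exact H1 ⟨c, a, b, hca, hab, hba, hac⟩

-- ## ldes of insertions

lemma ldes_insTop_last {n : ℕ} (p : Fin (n + 1)) (hp : (p : ℕ) = n) (σ : Equiv.Perm (Fin n)) :
    ldes (insTop p σ) = ldes σ := by
  have hlast : p = Fin.last n := Fin.ext hp
  subst hlast
  have happ : ∀ (j : ℕ) (h : j < n), insTop (Fin.last n) σ ⟨j, by omega⟩ =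
      Fin.castSucc (σ ⟨j, h⟩) := by
    intro j h
    exact insTop_apply_lt (Fin.last n) σ ⟨j, by omega⟩
      (by rw [Fin.lt_iff_val_lt_val]; exact h)
  apply le_antisymm
  · rw [ldes_le_iff]
    intro j hj h
    rcases Nat.lt_or_ge (j + 1) n with h2 | h2
    · rw [happ j (by omega), happ (j + 1) h2]
      rw [Fin.castSucc_lt_castSucc_iff]
      exact (ldes_le_iff_incFrom σ (ldes σ)).mp le_rfl j hj h2
    · have hj1 : j + 1 = n := by omega
      have he : (⟨j + 1, h⟩ : Fin (n + 1)) = Fin.last n := Fin.ext (by simpa using hj1)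
      rw [he, insTop_self, happ j (by omega)]
      exact Fin.castSucc_lt_last _
  · rw [ldes_le_iff]
    intro j hj h
    have := (ldes_le_iff_incFrom _ (ldes (insTop (Fin.last n) σ))).mp le_rfl j hj
      (by omega : j + 1 < n + 1)
    rw [happ j (by omega), happ (j + 1) h] at this
    exact Fin.castSucc_lt_castSucc_iff.mp this

lemma ldes_insTop_mid {n : ℕ} (p : Fin (n + 1)) (hp : (p : ℕ) < n) (σ : Equiv.Perm (Fin n))
    (hσ : ldes σ ≤ (p : ℕ)) : ldes (insTop p σ) = (p : ℕ) + 1 := by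
  have hinc : IncFrom σ (ldes σ) := (ldes_le_iff_incFrom σ (ldes σ)).mp le_rfl
  apply ldes_eq_of_mem
  · rw [mem_desSet]
    refine ⟨by omega, by omega, ?_⟩
    have he1 : (⟨(p : ℕ) + 1 - 1, by omega⟩ : Fin (n + 1)) = p := Fin.ext (by simp)
    rw [he1, insTop_self]
    have := insTop_apply_gt p σ ⟨(p : ℕ) + 1, by omega⟩
      (by rw [Fin.lt_iff_val_lt_val]; simp)
    rw [this]
    exact Fin.castSucc_lt_last _
  · rw [ldes_le_iff]
    intro j hj h
    have hj1 : (p : ℕ) < j := by omega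
    have e1 := insTop_apply_gt p σ ⟨j, by omega⟩ (by rw [Fin.lt_iff_val_lt_val]; exact hj1)
    have e2 := insTop_apply_gt p σ ⟨j + 1, h⟩ (by rw [Fin.lt_iff_val_lt_val]; exact Nat.lt_succ_of_lt hj1)
    rw [e1, e2, Fin.castSucc_lt_castSucc_iff]
    have := hinc.pairs ⟨j - 1, by omega⟩ ⟨j + 1 - 1, by omega⟩
      (by simp; omega) (by rw [Fin.lt_iff_val_lt_val]; simp; omega)
    convert this using 2

-- ## the core bijection

lemma mem_Tset {m : ℕ} (π : Equiv.Perm (Fin m)) : π ∈ Tset m ↔ Avoids321 π := by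
  simp [Tset]

def psiMap {n : ℕ} (k : ℕ) (hk : k ≤ n) (σ : Equiv.Perm (Fin n)) : Equiv.Perm (Fin (n + 1)) :=
  if ldes σ = k then insTop (Fin.last n) σ else insTop ⟨k - 1, by omega⟩ σ

lemma card_ldes_eq (n k : ℕ) (hk : k ≤ n) :
    ((Tset (n + 1)).filter (fun π => ldes π = k)).card =
      ((Tset n).filter (fun σ => ldes σ ≤ k)).card := by
  symm
  apply Finset.card_bij (fun σ _ => psiMap k hk σ)
  · -- maps to
    intro σ hσ
    rw [mem_filter] at hσ ⊢
    obtain ⟨hσT, hσl⟩ := hσ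
    rw [mem_Tset] at hσT
    by_cases h : ldes σ = k
    · rw [psiMap, if_pos h]
      constructor
      · rw [mem_Tset, avoids_insTop_iff]
        refine ⟨hσT, ?_⟩
        intro a b ha _
        exfalso
        have := a.isLt
        simp only [Fin.val_last] at ha
        omega
      · rw [ldes_insTop_last _ (Fin.val_last n) σ, h]
    · rw [psiMap, if_neg h]
      have hk1 : 1 ≤ k := by
        rcases Nat.eq_zero_or_pos k with rfl | h1
        · exact absurd (Nat.le_zero.mp hσl) h
        · exact h1
      have hσl' : ldes σ ≤ k - 1 := by omega
      have hpn : k - 1 < n := by omega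
      have hinc : IncFrom σ (k - 1) := (ldes_le_iff_incFrom σ (k - 1)).mp hσl'
      constructor
      · rw [mem_Tset, avoids_insTop_iff]
        exact ⟨hσT, fun a b ha hab => hinc.pairs a b ha hab⟩
      · rw [ldes_insTop_mid ⟨k - 1, by omega⟩ hpn σ hσl']
        show k - 1 + 1 = k
        omega
  · -- injective
    intro σ1 hσ1 σ2 hσ2 heq
    rw [mem_filter] at hσ1 hσ2
    by_cases h1 : ldes σ1 = k <;> by_cases h2 : ldes σ2 = k
    · rw [psiMap, if_pos h1, psiMap, if_pos h2] at heq
      exact insTop_inj _ _ _ heq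
    · exfalso
      rw [psiMap, if_pos h1, psiMap, if_neg h2] at heq
      have := congrArg (fun f : Equiv.Perm (Fin (n + 1)) => f.symm (Fin.last n)) heq
      simp only [insTop_symm_last] at this
      have hv := congrArg Fin.val this
      simp only [Fin.val_last] at hv
      have hk1 : 1 ≤ k := by
        rcases Nat.eq_zero_or_pos k with rfl | h' 
        · exact absurd (Nat.le_zero.mp hσ2.2) h2
        · exact h'
      omega
    · exfalso
      rw [psiMap, if_neg h1, psiMap, if_pos h2] at heq
      have := congrArg (fun f : Equiv.Perm (Fin (n + 1)) => f.symm (Fin.last n)) heq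
      simp only [insTop_symm_last] at this
      have hv := congrArg Fin.val this
      simp only [Fin.val_last] at hv
      have hk1 : 1 ≤ k := by
        rcases Nat.eq_zero_or_pos k with rfl | h' 
        · exact absurd (Nat.le_zero.mp hσ1.2) h1
        · exact h'
      omega
    · rw [psiMap, if_neg h1, psiMap, if_neg h2] at heq
      exact insTop_inj _ _ _ heq
  · -- surjective
    intro π hπ
    rw [mem_filter, mem_Tset] at hπ
    obtain ⟨hπT, hπl⟩ := hπ
    obtain ⟨σ, hσπ⟩ := exists_insTop π
    set p := π.symm (Fin.last n) with hp
    have hav : Avoids321 (insTop p σ) := by rw [hσπ]; exact hπT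
    rw [avoids_insTop_iff] at hav
    obtain ⟨hσT, H2⟩ := hav
    have hinc : IncFrom σ (p : ℕ) := by
      intro j hj h
      exact H2 ⟨j, Nat.lt_of_succ_lt h⟩ ⟨j + 1, h⟩ hj
        (by rw [Fin.lt_iff_val_lt_val]; exact Nat.lt_succ_self j)
    have hσl : ldes σ ≤ (p : ℕ) := (ldes_le_iff_incFrom σ (p : ℕ)).mpr hinc
    have hpb : (p : ℕ) ≤ n := by have := p.isLt; omega
    rcases eq_or_lt_of_le hpb with hpe | hpl
    · -- top at the end
      have hlk : ldes σ = k := by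
        rw [← hπl, ← hσπ, ldes_insTop_last p hpe σ]
      refine ⟨σ, ?_, ?_⟩
      · rw [mem_filter, mem_Tset]
        exact ⟨hσT, by omega⟩
      · rw [psiMap, if_pos hlk, ← hσπ]
        congr 1
        exact (Fin.ext hpe).symm
    · have hle : ldes (insTop p σ) = (p : ℕ) + 1 := ldes_insTop_mid p hpl σ hσl
      rw [hσπ, hπl] at hle
      have hk1 : 1 ≤ k := by omega
      refine ⟨σ, ?_, ?_⟩
      · rw [mem_filter, mem_Tset]
        exact ⟨hσT, by omega⟩
      · have hne : ldes σ ≠ k := by omega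
        rw [psiMap, if_neg hne, ← hσπ]
        congr 1
        exact Fin.ext (show ((⟨k - 1, by omega⟩ : Fin (n+1)) : ℕ) = (p : ℕ) by show k - 1 = (p : ℕ); omega)

-- ## ballot numbers

def Fb : ℕ → ℕ → ℕ
  | _, 0 => 1
  | n, k + 1 => (n + k).choose (k + 1) - (n + k).choose k

lemma choose_le_succ' {m j : ℕ} (h : j + 1 ≤ m - j) : m.choose j ≤ m.choose (j + 1) := by
  have h2 := Nat.choose_succ_right_eq m j
  have h3 : m.choose j * (j + 1) ≤ m.choose (j + 1) * (j + 1) := by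
    rw [h2]
    exact Nat.mul_le_mul_left _ (by omega)
  exact Nat.le_of_mul_le_mul_right h3 (by omega)

lemma succ_choose_le {m j : ℕ} (h : m - j ≤ j + 1) : m.choose (j + 1) ≤ m.choose j := by
  have h2 := Nat.choose_succ_right_eq m j
  have h3 : m.choose (j + 1) * (j + 1) ≤ m.choose j * (j + 1) := by
    rw [h2]
    exact Nat.mul_le_mul_left _ h
  exact Nat.le_of_mul_le_mul_right h3 (by omega)

lemma Fb_eq_zero {n k : ℕ} (h : n ≤ k) (hk : 1 ≤ k) : Fb n k = 0 := by
  match k with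
  | 0 => omega
  | j + 1 =>
    show (n + j).choose (j + 1) - (n + j).choose j = 0
    have : (n + j) - j ≤ j + 1 := by omega
    exact Nat.sub_eq_zero_of_le (succ_choose_le this)

lemma Fb_pascal (n k : ℕ) (hk : k + 1 ≤ n) : Fb (n + 1) (k + 1) = Fb (n + 1) k + Fb n (k + 1) := by
  match k with
  | 0 =>
    show (n + 1).choose 1 - (n + 1).choose 0 = 1 + (n.choose 1 - n.choose 0)
    rw [Nat.choose_one_right, Nat.choose_zero_right, Nat.choose_one_right, Nat.choose_zero_right]
    omega
  | j + 1 =>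
    have hj : j + 2 ≤ n := hk
    show (n + 1 + (j + 1)).choose (j + 2) - (n + 1 + (j + 1)).choose (j + 1)
      = ((n + 1 + j).choose (j + 1) - (n + 1 + j).choose j)
        + ((n + (j + 1)).choose (j + 2) - (n + (j + 1)).choose (j + 1))
    have e0 : n + 1 + (j + 1) = (n + j + 1) + 1 := by omega
    have e1 : n + 1 + j = n + j + 1 := by omega
    have e2 : n + (j + 1) = n + j + 1 := by omega
    rw [e0, e1, e2]
    set m := n + j + 1 with hm
    have p1 : (m + 1).choose (j + 2) = m.choose (j + 1) + m.choose (j + 2) :=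
      Nat.choose_succ_succ m (j + 1)
    have p2 : (m + 1).choose (j + 1) = m.choose j + m.choose (j + 1) :=
      Nat.choose_succ_succ m j
    have q1 : m.choose j ≤ m.choose (j + 1) := choose_le_succ' (by omega)
    have q2 : m.choose (j + 1) ≤ m.choose (j + 2) := choose_le_succ' (by omega)
    omega

lemma Fb_sum (n k : ℕ) (hk : k ≤ n) : (∑ j ∈ Finset.range (k + 1), Fb n j) = Fb (n + 1) k := by
  induction k with
  | zero => simp [Fb]
  | succ k ih =>
    rw [Finset.sum_range_succ, ih (by omega), Fb_pascal n k hk]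

-- ## main counting theorem

lemma card_filter_ldes_le (m k : ℕ) :
    ((Tset m).filter (fun σ => ldes σ ≤ k)).card
      = ∑ j ∈ Finset.range (k + 1), ((Tset m).filter (fun σ => ldes σ = j)).card := by
  induction k with
  | zero =>
    rw [Finset.sum_range_one]
    congr 1
    apply Finset.filter_congr
    intro σ _
    simp [Nat.le_zero]
  | succ k ih =>
    rw [Finset.sum_range_succ, ← ih, ← Finset.card_union_of_disjoint]
    · congr 1
      ext σ
      simp only [Finset.mem_union, Finset.mem_filter]
      constructor
      · rintro ⟨h1, h2⟩
        rcases Nat.lt_or_ge (ldes σ) (k + 1) with h | h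
        · exact Or.inl ⟨h1, by omega⟩
        · exact Or.inr ⟨h1, by omega⟩
      · rintro (⟨h1, h2⟩ | ⟨h1, h2⟩)
        · exact ⟨h1, by omega⟩
        · exact ⟨h1, by omega⟩
    · rw [Finset.disjoint_left]
      intro σ h1 h2
      rw [Finset.mem_filter] at h1 h2
      omega

lemma perm_fin_one_card : (Tset 1) = Finset.univ := by
  ext π
  simp only [Finset.mem_univ, iff_true, mem_Tset]
  rintro ⟨i, j, k, h1, h2, _, _⟩
  have : i = j := Subsingleton.elim i j
  rw [this] at h1
  exact lt_irrefl _ h1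

theorem card_ldes_filter (n : ℕ) (hn : 1 ≤ n) (k : ℕ) :
    ((Tset n).filter (fun π => ldes π = k)).card = Fb n k := by
  induction n, hn using Nat.le_induction generalizing k with
  | base =>
    have hall : ∀ π : Equiv.Perm (Fin 1), ldes π = 0 := by
      intro π
      have := ldes_le_sub_one π
      omega
    match k with
    | 0 =>
      have : (Tset 1).filter (fun π => ldes π = 0) = Tset 1 := by
        apply Finset.filter_true_of_mem
        intro π _
        exact hall π
      rw [this, perm_fin_one_card]
      show Fintype.card (Equiv.Perm (Fin 1)) = 1
      simp
    | j + 1 =>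
      have : (Tset 1).filter (fun π => ldes π = j + 1) = ∅ := by
        apply Finset.filter_false_of_mem
        intro π _
        rw [hall π]
        omega
      rw [this]
      show 0 = Fb 1 (j + 1)
      rw [Fb_eq_zero (by omega) (by omega)]
  | succ n hn1 ih =>
    rcases Nat.lt_or_ge k (n + 1) with hk | hk
    · rw [card_ldes_eq n k (by omega), card_filter_ldes_le n k]
      rw [Finset.sum_congr rfl (fun j _ => ih j)]
      exact Fb_sum n k (by omega)
    · have : (Tset (n + 1)).filter (fun π => ldes π = k) = ∅ := by
        apply Finset.filter_false_of_mem
        intro π _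
        have := ldes_le_sub_one π
        omega
      rw [this, Finset.card_empty, Fb_eq_zero (by omega) (by omega)]

-- ## rational form of the ballot numbers

lemma Fb_cast (n k : ℕ) (hn : 1 ≤ n) (hk : k < n) :
    (Fb n k : ℚ) = ((n : ℚ) - k) / ((n : ℚ) + k) * ((n + k).choose k : ℚ) := by
  match k with
  | 0 =>
    show (1 : ℚ) = _
    rw [Nat.add_zero, Nat.choose_zero_right]
    have : (n : ℚ) ≠ 0 := by positivity
    push_cast
    rw [sub_zero, add_zero, div_self this, mul_one]
  | j + 1 =>
    have hge : (n + j).choose j ≤ (n + j).choose (j + 1) := choose_le_succ' (by omega)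
    show (((n + j).choose (j + 1) - (n + j).choose j : ℕ) : ℚ) = _
    have hc1n := Nat.choose_succ_right_eq (n + j) j
    have e1 : n + j - j = n := by omega
    rw [e1] at hc1n
    have hc1 : ((n + j).choose (j + 1) : ℚ) * ((j : ℚ) + 1) = ((n + j).choose j : ℚ) * (n : ℚ) := by
      exact_mod_cast congrArg (Nat.cast : ℕ → ℚ) hc1n
    have hc2n : (n + (j + 1)).choose (j + 1) = (n + j).choose j + (n + j).choose (j + 1) :=
      Nat.choose_succ_succ (n + j) j
    rw [hc2n]
    have hne : ((n : ℚ) + ((j : ℚ) + 1)) ≠ 0 := by positivity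
    push_cast [hge]
    rw [div_mul_eq_mul_div, eq_div_iff hne]
    ring_nf
    ring_nf at hc1
    linear_combination (2 : ℚ) * hc1

-- ## Catalan number identity

lemma Fb_catalan (n : ℕ) (hn : 1 ≤ n) : Fb (n + 1) (n - 1) = catalan n := by
  match n, hn with
  | 1, _ => simp [Fb, catalan_one]
  | (m + 2), _ =>
    show Fb (m + 3) (m + 1) = catalan (m + 2)
    show (m + 3 + m).choose (m + 1) - (m + 3 + m).choose m = _
    have e0 : m + 3 + m = 2 * m + 3 := by omega
    rw [e0]
    set A := (2 * m + 3).choose (m + 1) with hA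
    set B := (2 * m + 3).choose m with hB
    have hABn := Nat.choose_succ_right_eq (2 * m + 3) m
    have e1 : 2 * m + 3 - m = m + 3 := by omega
    rw [e1] at hABn
    -- hABn : A * (m + 1) = B * (m + 3)
    have hBA : B ≤ A := by
      have h1 : B * (m + 1) ≤ B * (m + 3) := Nat.mul_le_mul_left _ (by omega)
      rw [← hABn] at h1
      exact Nat.le_of_mul_le_mul_right h1 (by omega)
    have hsym : (2 * m + 3).choose (m + 2) = A := by
      have h := Nat.choose_symm (show m + 1 ≤ 2 * m + 3 by omega)
      have e2 : 2 * m + 3 - (m + 1) = m + 2 := by omega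
      rw [e2] at h
      exact h
    have hcb : Nat.centralBinom (m + 2) = 2 * A := by
      have e3 : Nat.centralBinom (m + 2) = (2 * m + 3 + 1).choose (m + 2) := by
        unfold Nat.centralBinom
        congr 1
      rw [e3, Nat.choose_succ_succ (2 * m + 3) (m + 1), hsym]
      omega
    have hkey : Nat.centralBinom (m + 2) = (A - B) * (m + 3) := by
      have hABz : (A : ℤ) * ((m : ℤ) + 1) = (B : ℤ) * ((m : ℤ) + 3) := by
        exact_mod_cast congrArg (Nat.cast : ℕ → ℤ) hABn
      rw [hcb]
      zify [hBA]
      linear_combination -hABz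
    rw [catalan_eq_centralBinom_div]
    exact (Nat.div_eq_of_eq_mul_left (by omega) hkey).symm

-- ## assembly

theorem main_sum (n : ℕ) (hn : 1 ≤ n) (q : ℚ) :
    ∑ π ∈ Tset n, q ^ ldes π =
      ∑ k ∈ Finset.range n,
        (((n : ℚ) - k) / ((n : ℚ) + k)) * ((n + k).choose k) * q ^ k := by
  have h1 : ∑ k ∈ Finset.range n, ∑ π ∈ (Tset n).filter (fun π => ldes π = k), q ^ ldes π
      = ∑ π ∈ Tset n, q ^ ldes π := by
    apply Finset.sum_fiberwise_of_maps_to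
    intro π _
    rw [Finset.mem_range]
    have := ldes_le_sub_one π
    omega
  rw [← h1]
  apply Finset.sum_congr rfl
  intro k hk
  rw [Finset.mem_range] at hk
  have h2 : ∑ π ∈ (Tset n).filter (fun π => ldes π = k), q ^ ldes π
      = (((Tset n).filter (fun π => ldes π = k)).card : ℚ) * q ^ k := by
    rw [Finset.sum_congr rfl (fun π hπ => by rw [(Finset.mem_filter.mp hπ).2]),
      Finset.sum_const, nsmul_eq_mul]
  rw [h2, card_ldes_filter n hn k, Fb_cast n k hn hk]

theorem main_card (n : ℕ) (hn : 1 ≤ n) : (Tset n).card = catalan n := by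
  have h0 : (Tset n).filter (fun σ => ldes σ ≤ n - 1) = Tset n :=
    Finset.filter_true_of_mem (fun σ _ => ldes_le_sub_one σ)
  have h1 : (Tset n).card = ∑ j ∈ Finset.range (n - 1 + 1), ((Tset n).filter (fun σ => ldes σ = j)).card := by
    rw [← card_filter_ldes_le n (n - 1), h0]
  rw [h1, Finset.sum_congr rfl (fun j _ => card_ldes_filter n hn j), Fb_sum n (n - 1) (by omega),
    Fb_catalan n hn]

theorem ldes_gf_formula (n : ℕ) (hn : 1 ≤ n) (q : ℚ) :
    (∑ π ∈ Tset n, q ^ ldes π =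
        ∑ k ∈ Finset.range n,
          (((n : ℚ) - k) / ((n : ℚ) + k)) * ((n + k).choose k) * q ^ k) ∧
      (Tset n).card = catalan n :=
  ⟨main_sum n hn q, main_card n hn⟩
end
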